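/- For the die-game with uniform goal distribution, one step of the GCSL update applied to the optimal policy yields a suboptimal policy: starting from π_0(loaded|1) = 1, π_0(fair|g) = 1 for g ≠ 1, the updated policy satisfies π_1(loaded|1) = (1/6)·1 / ((1/6)·1 + (1/6)·(5/6)) = 6/11 < 1. -/

import Mathlib

/-- The two actions of the die game. -/
inductive Die where
  | fair : Die
  | loaded : Die
deriving DecidableEq

instance : Fintype Die where
  elems := {Die.fair, Die.loaded}
  complete := by intro x; cases x <;> simp

/-- Dynamics of the die game. -/
noncomputable def dyn : Die → Fin 6 → ℝ
  | Die.fair, _ => 1 / 6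
  | Die.loaded, j => if j = 0 then 1 else 0

/-- The optimal deterministic initial policy: loaded die for goal `1`, fair otherwise. -/
noncomputable def π0 : Die → Fin 6 → ℝ := fun a g =>
  if a = (if g = 0 then Die.loaded else Die.fair) then 1 else 0

/-- Marginal action distribution under `π0` with uniform goal distribution `p(g) = 1/6`. -/
noncomputable def m (a : Die) : ℝ := ∑ g : Fin 6, (1 / 6 : ℝ) * π0 a g

/-- One GCSL update applied to `π0`. -/
noncomputable def π1 (a : Die) (g : Fin 6) : ℝ :=
  dyn a g * m a / ∑ a' : Die, dyn a' g * m a'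

theorem Die.sum_univ {M : Type*} [AddCommMonoid M] (f : Die → M) :
    ∑ a, f a = f Die.fair + f Die.loaded :=
  Finset.sum_pair (by decide)

theorem m_loaded : m Die.loaded = 1 / 6 := by
  simp [m, π0]

theorem m_fair : m Die.fair = 5 / 6 := by
  simp [m, π0, Fin.sum_univ_six]
  norm_num

/-- Only the loaded die and the fair die with probability `1/6` reach the goal `0`. -/
theorem π1_loaded_zero_eq : π1 Die.loaded 0 = m Die.loaded / (m Die.fair / 6 + m Die.loaded) := by
  simp only [π1, Die.sum_univ, dyn, if_true]
  ring

theorem π1_loaded_zero : π1 Die.loaded 0 = 6 / 11 := by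
  rw [π1_loaded_zero_eq, m_loaded, m_fair]
  norm_num

/-- One GCSL step applied to the optimal policy of the die game yields a suboptimal
policy: `m(loaded) = 1/6`, `m(fair) = 5/6`, and `π1(loaded|1) = 6/11 < 1`. -/
theorem stmt_11 :
    m Die.loaded = 1 / 6 ∧ m Die.fair = 5 / 6 ∧
      π1 Die.loaded 0 = 6 / 11 ∧ π1 Die.loaded 0 < 1 := by
  refine ⟨m_loaded, m_fair, π1_loaded_zero, ?_⟩
  rw [π1_loaded_zero]
  norm_num
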